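/- arXiv:2403.13576 — 7 statements merged into one kernel-verified Lean document; each statement's English description precedes it below -/
import Mathlib

section
/- For real numbers γ₀, γ₁ ≠ 0 and s > 0, define q₊(s) = -(√(s²+(γ₀+γ₁)²) + √(s²+(γ₀-γ₁)²))²/(4γ₀γ₁). Then |q₊(s)| > 1. -/
theorem abs_qp_gt_one (γ₀ γ₁ s : ℝ) (h₀ : γ₀ ≠ 0) (h₁ : γ₁ ≠ 0) (hs : 0 < s) :
    1 < |(-((Real.sqrt (s^2 + (γ₀ + γ₁)^2) + Real.sqrt (s^2 + (γ₀ - γ₁)^2))^2 / (4 * γ₀ * γ₁)))| := by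
  set A := Real.sqrt (s^2 + (γ₀ + γ₁)^2) with hA
  set B := Real.sqrt (s^2 + (γ₀ - γ₁)^2) with hB
  have hA0 : 0 ≤ A := Real.sqrt_nonneg _
  have hB0 : 0 ≤ B := Real.sqrt_nonneg _
  have hAsq : A^2 = s^2 + (γ₀ + γ₁)^2 := Real.sq_sqrt (by positivity)
  have hBsq : B^2 = s^2 + (γ₀ - γ₁)^2 := Real.sq_sqrt (by positivity)
  have hAgt : |γ₀ + γ₁| < A := by
    have : |γ₀ + γ₁|^2 < A^2 := by rw [sq_abs, hAsq]; nlinarith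
    exact lt_of_pow_lt_pow_left₀ 2 hA0 this
  have hBgt : |γ₀ - γ₁| < B := by
    have : |γ₀ - γ₁|^2 < B^2 := by rw [sq_abs, hBsq]; nlinarith
    exact lt_of_pow_lt_pow_left₀ 2 hB0 this
  have hkey : 4 * |γ₀| * |γ₁| < (A + B)^2 := by
    have h1 : (|γ₀ + γ₁| + |γ₀ - γ₁|)^2 < (A + B)^2 := by
      have := abs_nonneg (γ₀ + γ₁)
      have := abs_nonneg (γ₀ - γ₁)
      nlinarith
    have h2 : 4 * |γ₀| * |γ₁| ≤ (|γ₀ + γ₁| + |γ₀ - γ₁|)^2 := by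
      nlinarith [sq_abs (γ₀ + γ₁), sq_abs (γ₀ - γ₁), sq_abs γ₀, sq_abs γ₁,
        abs_mul (γ₀ + γ₁) (γ₀ - γ₁), le_abs_self ((γ₀ + γ₁) * (γ₀ - γ₁)),
        neg_abs_le ((γ₀ + γ₁) * (γ₀ - γ₁)), abs_nonneg (γ₀ + γ₁), abs_nonneg (γ₀ - γ₁),
        sq_nonneg (|γ₀| - |γ₁|), abs_mul γ₀ γ₁, le_abs_self (γ₀ * γ₁),
        neg_abs_le (γ₀ * γ₁)]
    linarith
  have hpos : 0 < 4 * |γ₀| * |γ₁| := by positivity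
  rw [abs_neg, abs_div]
  rw [lt_div_iff₀ (by rw [abs_pos]; positivity)]
  have : |4 * γ₀ * γ₁| = 4 * |γ₀| * |γ₁| := by
    rw [abs_mul, abs_mul]; norm_num
  rw [this, abs_of_nonneg (by positivity : (0:ℝ) ≤ (A + B)^2)]
  linarith
end

section
/- For real numbers γ₀, γ₁ ≠ 0 and s > 0, define q₋(s) = -(√(s²+(γ₀+γ₁)²) - √(s²+(γ₀-γ₁)²))²/(4γ₀γ₁). Then |q₋(s)| < 1. -/
theorem abs_qm_lt_one (γ₀ γ₁ s : ℝ) (h₀ : γ₀ ≠ 0) (h₁ : γ₁ ≠ 0) (hs : 0 < s) :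
    |(-((Real.sqrt (s^2 + (γ₀ + γ₁)^2) - Real.sqrt (s^2 + (γ₀ - γ₁)^2))^2 / (4 * γ₀ * γ₁)))| < 1 := by
  have hA : (0:ℝ) < s^2 + (γ₀ + γ₁)^2 := by positivity
  have hB : (0:ℝ) < s^2 + (γ₀ - γ₁)^2 := by positivity
  set a := Real.sqrt (s^2 + (γ₀ + γ₁)^2) with ha
  set b := Real.sqrt (s^2 + (γ₀ - γ₁)^2) with hb
  have hap : 0 < a := Real.sqrt_pos.mpr hA
  have hbp : 0 < b := Real.sqrt_pos.mpr hB
  have ha2 : a^2 = s^2 + (γ₀ + γ₁)^2 := Real.sq_sqrt hA.le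
  have hb2 : b^2 = s^2 + (γ₀ - γ₁)^2 := Real.sq_sqrt hB.le
  have hd : 4 * γ₀ * γ₁ = (a - b) * (a + b) := by
    have : a^2 - b^2 = 4 * γ₀ * γ₁ := by rw [ha2, hb2]; ring
    nlinarith [this]
  by_cases hab : a = b
  · have : 4 * γ₀ * γ₁ = 0 := by rw [hd, hab]; ring
    exfalso
    have := mul_ne_zero (mul_ne_zero (by norm_num : (4:ℝ) ≠ 0) h₀) h₁
    exact this ‹4 * γ₀ * γ₁ = 0›
  · have hne : a - b ≠ 0 := sub_ne_zero.mpr hab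
    have key : (a - b)^2 / (4 * γ₀ * γ₁) = (a - b) / (a + b) := by
      rw [hd]
      field_simp
    rw [abs_neg, key, abs_div]
    rw [abs_of_pos (by linarith : 0 < a + b)]
    rw [div_lt_one (by linarith : 0 < a + b)]
    rcases abs_cases (a - b) with ⟨h, _⟩ | ⟨h, _⟩ <;> rw [h] <;> linarith
end

section
/- Let γ₀, γ₁ ≠ 0 and s > 0. The complex numbers q₊(s) and q₋(s) defined by q±(s) = -(√(s²+(γ₀+γ₁)²) ± √(s²+(γ₀-γ₁)²))²/(4γ₀γ₁) are the two eigenvalues of the 2×2 complex matrix M₁M₀, where M₀ = [[is/γ₁, -γ₀/γ₁],[1,0]] and M₁ = [[is/γ₀, -γ₁/γ₀],[1,0]] (i the imaginary unit); equivalently, the characteristic polynomial of M₁M₀ equals (X - q₊(s))(X - q₋(s)). -/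
/-!
With `A = √(s² + (γ₀ + γ₁)²)` and `B = √(s² + (γ₀ - γ₁)²)` one has `A² - B² = 4γ₀γ₁`, so
`q₊ q₋ = (A² - B²)² / (4γ₀γ₁)² = 1 = det (M₁ M₀)` and
`q₊ + q₋ = -(A² + B²) / (2γ₀γ₁) = -(s² + γ₀² + γ₁²) / (γ₀γ₁) = tr (M₁ M₀)`.
A `2 × 2` characteristic polynomial is determined by the trace and the determinant.
-/

open Polynomial

theorem Matrix.charpoly_fin_two_eq_of_trace_of_det {R : Type*} [CommRing R] [Nontrivial R]
    (M : Matrix (Fin 2) (Fin 2) R) {a b : R} (htr : M.trace = a + b) (hdet : M.det = a * b) :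
    M.charpoly = (X - C a) * (X - C b) := by
  rw [M.charpoly_fin_two, htr, hdet, C_add, C_mul]
  ring

theorem neg_sq_add_div_add_neg_sq_sub_div (A B c : ℝ) :
    -((A + B) ^ 2 / (4 * c)) + -((A - B) ^ 2 / (4 * c)) = -((A ^ 2 + B ^ 2) / (2 * c)) := by
  ring

theorem neg_sq_add_div_mul_neg_sq_sub_div {A B c : ℝ} (hc : c ≠ 0) (h : A ^ 2 - B ^ 2 = 4 * c) :
    -((A + B) ^ 2 / (4 * c)) * -((A - B) ^ 2 / (4 * c)) = 1 := by
  rw [neg_mul_neg, ← mul_div_mul_comm, ← mul_pow, ← sq_sub_sq, h, ← sq, div_self (by positivity)]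

section TransferMatrix

variable {γ₀ γ₁ : ℝ} (s : ℝ)

theorem trace_transfer_matrix_mul (h₀ : γ₀ ≠ 0) (h₁ : γ₁ ≠ 0) :
    (!![Complex.I * s / γ₀, -(γ₁ / γ₀ : ℝ); 1, 0] *
      !![Complex.I * s / γ₁, -(γ₀ / γ₁ : ℝ); 1, 0]).trace =
      ((-((s ^ 2 + γ₀ ^ 2 + γ₁ ^ 2) / (γ₀ * γ₁)) : ℝ) : ℂ) := by
  have h₀' : (γ₀ : ℂ) ≠ 0 := by exact_mod_cast h₀
  have h₁' : (γ₁ : ℂ) ≠ 0 := by exact_mod_cast h₁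
  simp only [Matrix.mul_fin_two, Matrix.trace_fin_two_of]
  push_cast
  field_simp
  linear_combination (s : ℂ) ^ 2 * Complex.I_sq

theorem det_transfer_matrix_mul (h₀ : γ₀ ≠ 0) (h₁ : γ₁ ≠ 0) :
    (!![Complex.I * s / γ₀, -(γ₁ / γ₀ : ℝ); 1, 0] *
      !![Complex.I * s / γ₁, -(γ₀ / γ₁ : ℝ); 1, 0]).det = 1 := by
  have h₀' : (γ₀ : ℂ) ≠ 0 := by exact_mod_cast h₀
  have h₁' : (γ₁ : ℂ) ≠ 0 := by exact_mod_cast h₁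
  simp only [Matrix.det_mul, Matrix.det_fin_two_of]
  push_cast
  field_simp
  ring

end TransferMatrix

open Polynomial in
theorem charpoly_transfer_matrix_general (γ₀ γ₁ s : ℝ) (h₀ : γ₀ ≠ 0) (h₁ : γ₁ ≠ 0)
    (M₀ M₁ : Matrix (Fin 2) (Fin 2) ℂ)
    (hM₀ : M₀ = !![Complex.I * s / γ₁, -(γ₀ / γ₁ : ℝ); 1, 0])
    (hM₁ : M₁ = !![Complex.I * s / γ₀, -(γ₁ / γ₀ : ℝ); 1, 0])
    (qp qm : ℝ)
    (hqp : qp = -((Real.sqrt (s^2 + (γ₀ + γ₁)^2) + Real.sqrt (s^2 + (γ₀ - γ₁)^2))^2 / (4 * γ₀ * γ₁)))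
    (hqm : qm = -((Real.sqrt (s^2 + (γ₀ + γ₁)^2) - Real.sqrt (s^2 + (γ₀ - γ₁)^2))^2 / (4 * γ₀ * γ₁))) :
    (M₁ * M₀).charpoly = (X - C (qp : ℂ)) * (X - C (qm : ℂ)) := by
  set A := Real.sqrt (s ^ 2 + (γ₀ + γ₁) ^ 2)
  set B := Real.sqrt (s ^ 2 + (γ₀ - γ₁) ^ 2)
  have hA : A ^ 2 = s ^ 2 + (γ₀ + γ₁) ^ 2 := Real.sq_sqrt (by positivity)
  have hB : B ^ 2 = s ^ 2 + (γ₀ - γ₁) ^ 2 := Real.sq_sqrt (by positivity)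
  rw [mul_assoc] at hqp hqm
  have hsum : qp + qm = -((s ^ 2 + γ₀ ^ 2 + γ₁ ^ 2) / (γ₀ * γ₁)) := by
    rw [hqp, hqm, neg_sq_add_div_add_neg_sq_sub_div, hA, hB]
    field_simp
    ring
  have hprod : qp * qm = 1 :=
    hqp ▸ hqm ▸ neg_sq_add_div_mul_neg_sq_sub_div (mul_ne_zero h₀ h₁) (by rw [hA, hB]; ring)
  subst hM₀ hM₁
  apply Matrix.charpoly_fin_two_eq_of_trace_of_det
  · rw [trace_transfer_matrix_mul s h₀ h₁, ← hsum, Complex.ofReal_add]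
  · rw [det_transfer_matrix_mul s h₀ h₁, ← Complex.ofReal_mul, hprod, Complex.ofReal_one]

open Polynomial in
theorem charpoly_transfer_matrix (γ₀ γ₁ s : ℝ) (h₀ : γ₀ ≠ 0) (h₁ : γ₁ ≠ 0) (hs : 0 < s)
    (M₀ M₁ : Matrix (Fin 2) (Fin 2) ℂ)
    (hM₀ : M₀ = !![Complex.I * s / γ₁, -(γ₀ / γ₁ : ℝ); 1, 0])
    (hM₁ : M₁ = !![Complex.I * s / γ₀, -(γ₁ / γ₀ : ℝ); 1, 0])
    (qp qm : ℝ)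
    (hqp : qp = -((Real.sqrt (s^2 + (γ₀ + γ₁)^2) + Real.sqrt (s^2 + (γ₀ - γ₁)^2))^2 / (4 * γ₀ * γ₁)))
    (hqm : qm = -((Real.sqrt (s^2 + (γ₀ + γ₁)^2) - Real.sqrt (s^2 + (γ₀ - γ₁)^2))^2 / (4 * γ₀ * γ₁))) :
    (M₁ * M₀).charpoly = (X - C (qp : ℂ)) * (X - C (qm : ℂ)) :=
  charpoly_transfer_matrix_general γ₀ γ₁ s h₀ h₁ M₀ M₁ hM₀ hM₁ qp qm hqp hqm
end

section
/- Let γ₀, γ₁ ≠ 0, s > 0, and set p(s) = (s²+(γ₀+γ₁)²)(s²+(γ₀-γ₁)²) and q±(s) = -(√(s²+(γ₀+γ₁)²) ± √(s²+(γ₀-γ₁)²))²/(4γ₀γ₁). Then for every natural number n, (M₁M₀)ⁿ = (1/2){q₊ⁿ+q₋ⁿ + ((s²-γ₀²+γ₁²)/√p)(q₊ⁿ-q₋ⁿ)}E₁₁ + i(sγ₀/√p)(q₊ⁿ-q₋ⁿ)E₁₂ - i(sγ₀/√p)(q₊ⁿ-q₋ⁿ)E₂₁ + (1/2){q₊ⁿ+q₋ⁿ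 - ((s²-γ₀²+γ₁²)/√p)(q₊ⁿ-q₋ⁿ)}E₂₂, where Eⱼₖ are the 2×2 matrix units. -/
/-!
`A = M₁ M₀` has determinant `1` and trace `-(s² + γ₀² + γ₁²)/(γ₀γ₁)`, and `q₊`, `q₋` are the two
roots of its characteristic polynomial `x² - tr A x + 1`; they are distinct because
`γ₀γ₁ (q₋ - q₊) = √p > 0`. By Cayley–Hamilton `(A - q₊)(A - q₋) = 0`, and this alone forces
`(q₊ - q₋) Aⁿ = q₊ⁿ (A - q₋) - q₋ⁿ (A - q₊)`; reading off the entries gives the formula.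
-/
open Matrix Polynomial

theorem sub_smul_pow_eq_of_mul_eq_zero {K R : Type*} [CommRing K] [Ring R] [Algebra K R]
    {A : R} {a b : K} (h : (A - algebraMap K R a) * (A - algebraMap K R b) = 0) (n : ℕ) :
    (a - b) • A ^ n = a ^ n • (A - algebraMap K R b) - b ^ n • (A - algebraMap K R a) := by
  have hcomm : (A - algebraMap K R b) * (A - algebraMap K R a) =
      (A - algebraMap K R a) * (A - algebraMap K R b) := by
    simp only [sub_mul, mul_sub, Algebra.commutes, ← map_mul, mul_comm a b]
    abel
  have ha : A * (A - algebraMap K R b) = a • (A - algebraMap K R b) := by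
    rw [← sub_eq_zero, Algebra.smul_def, ← sub_mul, h]
  have hb : A * (A - algebraMap K R a) = b • (A - algebraMap K R a) := by
    rw [← sub_eq_zero, Algebra.smul_def, ← sub_mul, hcomm, h]
  induction n with
  | zero => simp [sub_smul, Algebra.algebraMap_eq_smul_one]
  | succ n ih =>
    rw [pow_succ', ← mul_smul_comm, ih, mul_sub, mul_smul_comm, mul_smul_comm, ha, hb,
      smul_smul, smul_smul, pow_succ, pow_succ]

theorem Matrix.mul_sub_algebraMap_eq_zero_of_fin_two {R : Type*} [CommRing R] [Nontrivial R]
    (A : Matrix (Fin 2) (Fin 2) R) {a b : R} (hsum : a + b = A.trace) (hprod : a * b = A.det) :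
    (A - algebraMap R _ a) * (A - algebraMap R _ b) = 0 := by
  have hA := A.aeval_self_charpoly
  rw [charpoly_fin_two, ← hsum, ← hprod] at hA
  simp only [map_add, map_sub, map_mul, aeval_X, aeval_C, aeval_X_pow] at hA
  rw [← hA]
  simp only [sub_mul, mul_sub, add_mul, Algebra.commutes, ← map_mul, mul_comm a b, sq]
  abel

section TransferMatrix

variable {K : Type*} [Field K]

def transferMatrix (x y c : K) : Matrix (Fin 2) (Fin 2) K :=
  !![c / x, -(y / x); 1, 0]

theorem det_transferMatrix (x y c : K) : (transferMatrix x y c).det = y / x := by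
  simp [transferMatrix, det_fin_two_of]

theorem transferMatrix_mul_transferMatrix {x : K} (hx : x ≠ 0) (y c : K) :
    transferMatrix x y c * transferMatrix y x c =
      !![(c ^ 2 - y ^ 2) / (x * y), -(c / y); c / y, -(x / y)] := by
  simp [transferMatrix, field, sub_eq_add_neg]

theorem det_transferMatrix_mul_transferMatrix {x y : K} (hx : x ≠ 0) (hy : y ≠ 0) (c : K) :
    (transferMatrix x y c * transferMatrix y x c).det = 1 := by
  rw [det_mul, det_transferMatrix, det_transferMatrix]
  field_simp

end TransferMatrix

theorem transfer_eigenvalues {γ₀ γ₁ s p qp qm : ℝ} (h₀ : γ₀ ≠ 0) (h₁ : γ₁ ≠ 0) (hs : 0 < s)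
    (hp : p = (s^2 + (γ₀ + γ₁)^2) * (s^2 + (γ₀ - γ₁)^2))
    (hqp : qp = -((Real.sqrt (s^2 + (γ₀ + γ₁)^2) + Real.sqrt (s^2 + (γ₀ - γ₁)^2))^2 / (4 * γ₀ * γ₁)))
    (hqm : qm = -((Real.sqrt (s^2 + (γ₀ + γ₁)^2) - Real.sqrt (s^2 + (γ₀ - γ₁)^2))^2 / (4 * γ₀ * γ₁))) :
    γ₀ * γ₁ * (qp + qm) = -(s ^ 2 + γ₀ ^ 2 + γ₁ ^ 2) ∧ qp * qm = 1 ∧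
      Real.sqrt p = γ₀ * γ₁ * (qm - qp) ∧ qp ≠ qm := by
  set a := Real.sqrt (s^2 + (γ₀ + γ₁)^2)
  set b := Real.sqrt (s^2 + (γ₀ - γ₁)^2)
  have ha : a ^ 2 = s^2 + (γ₀ + γ₁)^2 := Real.sq_sqrt (by positivity)
  have hb : b ^ 2 = s^2 + (γ₀ - γ₁)^2 := Real.sq_sqrt (by positivity)
  have hab : a ^ 2 - b ^ 2 = 4 * γ₀ * γ₁ := by rw [ha, hb]; ring
  have hsqrt : Real.sqrt p = γ₀ * γ₁ * (qm - qp) := by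
    rw [hp, Real.sqrt_mul (by positivity), hqp, hqm]
    field_simp
    ring
  have hp_pos : 0 < Real.sqrt p := by rw [hp]; positivity
  refine ⟨?_, ?_, hsqrt, fun h => ?_⟩
  · rw [hqp, hqm]
    field_simp
    linear_combination -2 * ha - 2 * hb
  · -- `(a + b)² (a - b)² = (a² - b²)² = (4 γ₀ γ₁)²`
    rw [hqp, hqm]
    field_simp
    linear_combination (a ^ 2 - b ^ 2 + 4 * γ₀ * γ₁) * hab
  · rw [hsqrt, h, sub_self, mul_zero] at hp_pos
    exact hp_pos.false

theorem transfer_matrix_pow (γ₀ γ₁ s : ℝ) (h₀ : γ₀ ≠ 0) (h₁ : γ₁ ≠ 0) (hs : 0 < s)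
    (M₀ M₁ : Matrix (Fin 2) (Fin 2) ℂ)
    (hM₀ : M₀ = !![Complex.I * s / γ₁, -(γ₀ / γ₁ : ℝ); 1, 0])
    (hM₁ : M₁ = !![Complex.I * s / γ₀, -(γ₁ / γ₀ : ℝ); 1, 0])
    (p qp qm : ℝ)
    (hp : p = (s^2 + (γ₀ + γ₁)^2) * (s^2 + (γ₀ - γ₁)^2))
    (hqp : qp = -((Real.sqrt (s^2 + (γ₀ + γ₁)^2) + Real.sqrt (s^2 + (γ₀ - γ₁)^2))^2 / (4 * γ₀ * γ₁)))
    (hqm : qm = -((Real.sqrt (s^2 + (γ₀ + γ₁)^2) - Real.sqrt (s^2 + (γ₀ - γ₁)^2))^2 / (4 * γ₀ * γ₁))) :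
    ∀ n : ℕ, (M₁ * M₀) ^ n =
      ((1 / 2 : ℂ) * ((qp : ℂ)^n + (qm : ℂ)^n
          + ((s^2 - γ₀^2 + γ₁^2 : ℝ) / (Real.sqrt p : ℝ) : ℝ) * ((qp : ℂ)^n - (qm : ℂ)^n)))
        • Matrix.single 0 0 (1 : ℂ)
      + (Complex.I * ((s * γ₀ / Real.sqrt p : ℝ) : ℂ) * ((qp : ℂ)^n - (qm : ℂ)^n))
        • Matrix.single 0 1 (1 : ℂ)
      - (Complex.I * ((s * γ₀ / Real.sqrt p : ℝ) : ℂ) * ((qp : ℂ)^n - (qm : ℂ)^n))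
        • Matrix.single 1 0 (1 : ℂ)
      + ((1 / 2 : ℂ) * ((qp : ℂ)^n + (qm : ℂ)^n
          - ((s^2 - γ₀^2 + γ₁^2 : ℝ) / (Real.sqrt p : ℝ) : ℝ) * ((qp : ℂ)^n - (qm : ℂ)^n)))
        • Matrix.single 1 1 (1 : ℂ) := by
  intro n
  obtain ⟨hsum, hprod, hsqrt, hne⟩ := transfer_eigenvalues h₀ h₁ hs hp hqp hqm
  have hγ₀ : (γ₀ : ℂ) ≠ 0 := by exact_mod_cast h₀
  have hγ₁ : (γ₁ : ℂ) ≠ 0 := by exact_mod_cast h₁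
  have hneC : (qp : ℂ) ≠ qm := by exact_mod_cast hne
  have hsumC : (γ₀ * γ₁ * (qp + qm) : ℂ) = -(s ^ 2 + γ₀ ^ 2 + γ₁ ^ 2) := by exact_mod_cast hsum
  have hM : M₁ * M₀ =
      transferMatrix (γ₀ : ℂ) γ₁ (Complex.I * s) * transferMatrix (γ₁ : ℂ) γ₀ (Complex.I * s) := by
    rw [hM₀, hM₁]; push_cast; rfl
  have htrace : (qp : ℂ) + qm = (M₁ * M₀).trace := by
    rw [hM, transferMatrix_mul_transferMatrix hγ₀, trace_fin_two_of, mul_pow, Complex.I_sq]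
    field_simp
    linear_combination hsumC
  have hdet : (qp : ℂ) * qm = (M₁ * M₀).det := by
    rw [hM, det_transferMatrix_mul_transferMatrix hγ₀ hγ₁]
    exact_mod_cast hprod
  rw [← inv_smul_smul₀ (sub_ne_zero.2 hneC) ((M₁ * M₀) ^ n), sub_smul_pow_eq_of_mul_eq_zero
    ((M₁ * M₀).mul_sub_algebraMap_eq_zero_of_fin_two htrace hdet), hM,
    transferMatrix_mul_transferMatrix hγ₀]
  ext i j
  fin_cases i <;> fin_cases j <;> simp [algebraMap_matrix_apply, hsqrt, mul_pow] <;>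
    field_simp [sub_ne_zero.2 hneC.symm]
  · linear_combination (qm - qp) * (qm ^ n - qp ^ n) * hsumC
  · ring
  · ring
  · linear_combination (qm - qp) * (qm ^ n - qp ^ n) * hsumC
end

section
/- Let γ₀, γ₁ be real with 0 < |γ₀| < |γ₁| and set r = γ₀/γ₁ and q₋(s) = -(√(s²+(γ₀+γ₁)²) - √(s²+(γ₀-γ₁)²))²/(4γ₀γ₁). Then lim_{s→0⁺} q₋(s) = -γ₀/γ₁, and for each n ≥ 0, lim_{s→0⁺} s·F_{2n}(s) = (1 - r²)·(-r)ⁿ where F_{2n}(s) = ((γ₁ + γ₀·q₋(s))/(s·γ₁))·q₋(s)ⁿ. -/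
open Filter Topology in
theorem final_value_localization (γ₀ γ₁ : ℝ) (h₀ : 0 < |γ₀|) (h : |γ₀| < |γ₁|)
    (r : ℝ) (hr : r = γ₀ / γ₁)
    (qm : ℝ → ℝ)
    (hqm : ∀ s : ℝ, qm s =
      -((Real.sqrt (s^2 + (γ₀ + γ₁)^2) - Real.sqrt (s^2 + (γ₀ - γ₁)^2))^2 / (4 * γ₀ * γ₁)))
    (F : ℕ → ℝ → ℝ)
    (hF : ∀ n : ℕ, ∀ s : ℝ, F n s = ((γ₁ + γ₀ * qm s) / (s * γ₁)) * (qm s)^n) :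
    Tendsto qm (𝓝[>] 0) (𝓝 (-γ₀ / γ₁)) ∧
    ∀ n : ℕ, Tendsto (fun s => s * F n s) (𝓝[>] 0) (𝓝 ((1 - r^2) * (-r)^n)) := by
  have hγ₀ : γ₀ ≠ 0 := by
    intro hh; simp [hh] at h₀
  have hγ₁ : γ₁ ≠ 0 := by
    intro hh; simp [hh] at h
    exact absurd h (not_lt.2 (abs_nonneg _))
  have hfun : qm = fun s : ℝ =>
      -((Real.sqrt (s^2 + (γ₀ + γ₁)^2) - Real.sqrt (s^2 + (γ₀ - γ₁)^2))^2 / (4 * γ₀ * γ₁)) :=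
    funext hqm
  -- value at 0
  have hmul : |γ₀ + γ₁| * |γ₀ - γ₁| = γ₁ ^ 2 - γ₀ ^ 2 := by
    have hsq : γ₀ ^ 2 < γ₁ ^ 2 := by
      have := mul_lt_mul'' h h (abs_nonneg _) (abs_nonneg _)
      simpa [abs_mul_abs_self, sq] using this
    rw [← abs_mul]
    have : (γ₀ + γ₁) * (γ₀ - γ₁) = -(γ₁ ^ 2 - γ₀ ^ 2) := by ring
    rw [this, abs_neg, abs_of_nonneg (by linarith)]
  have hval : -((Real.sqrt ((0:ℝ)^2 + (γ₀ + γ₁)^2) - Real.sqrt ((0:ℝ)^2 + (γ₀ - γ₁)^2))^2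
      / (4 * γ₀ * γ₁)) = -γ₀ / γ₁ := by
    have h1 : Real.sqrt ((0:ℝ)^2 + (γ₀ + γ₁)^2) = |γ₀ + γ₁| := by
      simp [Real.sqrt_sq_eq_abs]
    have h2 : Real.sqrt ((0:ℝ)^2 + (γ₀ - γ₁)^2) = |γ₀ - γ₁| := by
      simp [Real.sqrt_sq_eq_abs]
    rw [h1, h2]
    have hexp : (|γ₀ + γ₁| - |γ₀ - γ₁|) ^ 2 = 4 * γ₀ ^ 2 := by
      have e1 : (|γ₀ + γ₁| - |γ₀ - γ₁|) ^ 2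
          = |γ₀ + γ₁| ^ 2 - 2 * (|γ₀ + γ₁| * |γ₀ - γ₁|) + |γ₀ - γ₁| ^ 2 := by ring
      rw [e1, sq_abs, sq_abs, hmul]; ring
    rw [hexp]
    field_simp
  have hq : Tendsto qm (𝓝[>] (0:ℝ)) (𝓝 (-γ₀ / γ₁)) := by
    rw [hfun]
    have hc : ContinuousAt (fun s : ℝ =>
        -((Real.sqrt (s^2 + (γ₀ + γ₁)^2) - Real.sqrt (s^2 + (γ₀ - γ₁)^2))^2
          / (4 * γ₀ * γ₁))) 0 := by
      apply ContinuousAt.neg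
      apply ContinuousAt.div_const
      apply ContinuousAt.pow
      exact ((Real.continuous_sqrt.comp (by continuity)).sub
        (Real.continuous_sqrt.comp (by continuity))).continuousAt
    have := hc.continuousWithinAt (s := Set.Ioi (0:ℝ))
    rw [ContinuousWithinAt] at this
    simpa only [hval] using this
  refine ⟨hq, fun n => ?_⟩
  have hlim : Tendsto (fun s => ((γ₁ + γ₀ * qm s) / γ₁) * (qm s) ^ n) (𝓝[>] (0:ℝ))
      (𝓝 (((γ₁ + γ₀ * (-γ₀ / γ₁)) / γ₁) * (-γ₀ / γ₁) ^ n)) :=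
    (((tendsto_const_nhds.add (tendsto_const_nhds.mul hq)).div_const γ₁).mul (hq.pow n))
  have hvaleq : ((γ₁ + γ₀ * (-γ₀ / γ₁)) / γ₁) * (-γ₀ / γ₁) ^ n = (1 - r ^ 2) * (-r) ^ n := by
    subst hr
    have : -(γ₀ / γ₁) = -γ₀ / γ₁ := by ring
    rw [← this]
    congr 1
    field_simp
    ring
  rw [← hvaleq]
  apply hlim.congr'
  filter_upwards [self_mem_nhdsWithin] with s hs
  have hs' : s ≠ 0 := ne_of_gt hs
  rw [hF]
  field_simp
end

section
/- Let γ₀, γ₁ be real with 0 < |γ₁| ≤ |γ₀|, and let q₋(s) = -(√(s²+(γ₀+γ₁)²) - √(s²+(γ₀-γ₁)²))²/(4γ₀γ₁). Then for each n ≥ 0, lim_{s→0⁺} s·F_{2n}(s) = 0, where F_{2n}(s) = ((γ₁ + γ₀·q₋(s))/(s·γ₁))·q₋(s)ⁿ. -/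
open Filter Topology in
theorem final_value_delocalization (γ₀ γ₁ : ℝ) (h₁ : 0 < |γ₁|) (h : |γ₁| ≤ |γ₀|)
    (qm : ℝ → ℝ)
    (hqm : ∀ s : ℝ, qm s =
      -((Real.sqrt (s^2 + (γ₀ + γ₁)^2) - Real.sqrt (s^2 + (γ₀ - γ₁)^2))^2 / (4 * γ₀ * γ₁)))
    (F : ℕ → ℝ → ℝ)
    (hF : ∀ n : ℕ, ∀ s : ℝ, F n s = ((γ₁ + γ₀ * qm s) / (s * γ₁)) * (qm s)^n) :
    ∀ n : ℕ, Tendsto (fun s => s * F n s) (𝓝[>] 0) (𝓝 0) := by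
  intro n
  have hγ₁ : γ₁ ≠ 0 := abs_pos.mp h₁
  have hγ₀ : γ₀ ≠ 0 := abs_pos.mp (lt_of_lt_of_le h₁ h)
  have hsqle : γ₁ ^ 2 ≤ γ₀ ^ 2 := by
    have := sq_abs γ₀; have := sq_abs γ₁
    nlinarith [abs_nonneg γ₀, abs_nonneg γ₁]
  have hq0 : γ₁ + γ₀ * qm 0 = 0 := by
    rw [hqm]
    have h1 : Real.sqrt ((0:ℝ)^2 + (γ₀+γ₁)^2) = |γ₀+γ₁| := by
      rw [show (0:ℝ)^2 + (γ₀+γ₁)^2 = (γ₀+γ₁)^2 by ring, Real.sqrt_sq_eq_abs]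
    have h2 : Real.sqrt ((0:ℝ)^2 + (γ₀-γ₁)^2) = |γ₀-γ₁| := by
      rw [show (0:ℝ)^2 + (γ₀-γ₁)^2 = (γ₀-γ₁)^2 by ring, Real.sqrt_sq_eq_abs]
    rw [h1, h2]
    have habs : |γ₀+γ₁| * |γ₀-γ₁| = γ₀^2 - γ₁^2 := by
      rw [← abs_mul, show (γ₀+γ₁)*(γ₀-γ₁) = γ₀^2-γ₁^2 by ring,
        abs_of_nonneg (by linarith)]
    have hsq : (|γ₀+γ₁| - |γ₀-γ₁|)^2 = 4*γ₁^2 := by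
      nlinarith [sq_abs (γ₀+γ₁), sq_abs (γ₀-γ₁)]
    rw [hsq]
    field_simp
    ring
  have hcont : Tendsto qm (𝓝[>] 0) (𝓝 (qm 0)) := by
    have hc : Continuous (fun s : ℝ =>
        -((Real.sqrt (s^2 + (γ₀ + γ₁)^2) - Real.sqrt (s^2 + (γ₀ - γ₁)^2))^2 / (4 * γ₀ * γ₁))) := by
      continuity
    have h2 : qm = fun s => -((Real.sqrt (s^2 + (γ₀ + γ₁)^2) -
        Real.sqrt (s^2 + (γ₀ - γ₁)^2))^2 / (4 * γ₀ * γ₁)) := funext hqm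
    rw [h2]
    exact (hc.tendsto 0).mono_left nhdsWithin_le_nhds
  have hT : Tendsto (fun s => ((γ₁ + γ₀ * qm s) / γ₁) * (qm s)^n) (𝓝[>] 0)
      (𝓝 (((γ₁ + γ₀ * qm 0) / γ₁) * (qm 0)^n)) :=
    ((tendsto_const_nhds.add (tendsto_const_nhds.mul hcont)).div_const γ₁).mul (hcont.pow n)
  rw [hq0, zero_div, zero_mul] at hT
  refine hT.congr' ?_
  filter_upwards [self_mem_nhdsWithin] with s hs
  have hs0 : s ≠ 0 := ne_of_gt hs
  rw [hF]
  field_simp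
end

section
/- Let γ₀, γ₁ ≠ 0, s > 0, q₋ = q₋(s) as above, and define F : ℕ → ℂ by F(2n) = ((γ₁ + γ₀·q₋)/(s·γ₁))·q₋ⁿ and F(2n+1) = (i/γ₁)·q₋^{n+1}. Then F satisfies the recurrence relations i·(s·F(0) - 1) = γ₀·F(1), i·s·F(2n) = γ₁·F(2n-1) + γ₀·F(2n+1) for n ≥ 1, and i·s·F(2n+1) = γ₀·F(2n) + γ₁·F(2n+2) for n ≥ 0. -/
/-!
Two of the recurrences hold for every `q` once the denominators are cleared. In the third,
`i² = -1` turns `i s F(2n+1)` into `-s q^(n+1)/γ₁`, and the difference of the two sides is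
`q^n/(sγ₁)` times `γ₀γ₁ q² + (s² + γ₀² + γ₁²) q + γ₀γ₁`, which vanishes at `q = q₋(s)`.
-/

open Complex

/-- The paper's `q₋(s)`; since `x / 0 = 0` in Lean, it is `0` when `γ₀γ₁ = 0`. -/
noncomputable def qMinus (γ₀ γ₁ s : ℝ) : ℝ :=
  -((Real.sqrt (s^2 + (γ₀ + γ₁)^2) - Real.sqrt (s^2 + (γ₀ - γ₁)^2))^2 / (4 * γ₀ * γ₁))

/- With `A, B` the two square roots, `4γ₀γ₁ q₋ = 2AB - 2c` for `c = s² + γ₀² + γ₁²`, and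
squaring away `AB` using `A²B² = c² - 4γ₀²γ₁²` leaves `16γ₀²γ₁²` times the quadratic. -/
theorem qMinus_quadratic (γ₀ γ₁ s : ℝ) :
    γ₀ * γ₁ * qMinus γ₀ γ₁ s ^ 2 + (s^2 + γ₀^2 + γ₁^2) * qMinus γ₀ γ₁ s + γ₀ * γ₁ = 0 := by
  by_cases hγ : γ₀ * γ₁ = 0
  · simp [qMinus, hγ, mul_assoc]
  set A := Real.sqrt (s^2 + (γ₀ + γ₁)^2)
  set B := Real.sqrt (s^2 + (γ₀ - γ₁)^2)
  set q := qMinus γ₀ γ₁ s with hq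
  have hA : A^2 = s^2 + (γ₀ + γ₁)^2 := Real.sq_sqrt (by positivity)
  have hB : B^2 = s^2 + (γ₀ - γ₁)^2 := Real.sq_sqrt (by positivity)
  have hAB : (A * B)^2 = (s^2 + γ₀^2 + γ₁^2)^2 - 4 * γ₀^2 * γ₁^2 := by
    rw [mul_pow, hA, hB]; ring
  have hlin : 4 * γ₀ * γ₁ * q = 2 * (A * B) - 2 * (s^2 + γ₀^2 + γ₁^2) := by
    obtain ⟨h₀, h₁⟩ := mul_ne_zero_iff.mp hγ
    rw [hq, qMinus]; field_simp; linear_combination -hA - hB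
  have key : (16 * γ₀^2 * γ₁^2) * (γ₀ * γ₁ * q^2 + (s^2 + γ₀^2 + γ₁^2) * q + γ₀ * γ₁) = 0 := by
    linear_combination
      (γ₀ * γ₁ * (4 * γ₀ * γ₁ * q + 2 * (A * B) + 2 * (s^2 + γ₀^2 + γ₁^2))) * hlin
        + (4 * γ₀ * γ₁) * hAB
  have h16 : (16 * γ₀^2 * γ₁^2 : ℝ) ≠ 0 := by
    rw [mul_assoc, ← mul_pow]; exact mul_ne_zero (by norm_num) (pow_ne_zero 2 hγ)
  exact (mul_eq_zero.mp key).resolve_left h16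

section Recurrence

variable {γ₀ γ₁ s q : ℝ} {F : ℕ → ℂ}

theorem laplace_recurrence_origin (hs : s ≠ 0) (h₁ : γ₁ ≠ 0)
    (hFeven : ∀ n : ℕ, F (2 * n) = (((γ₁ + γ₀ * q) / (s * γ₁) : ℝ) : ℂ) * (q : ℂ)^n)
    (hFodd : ∀ n : ℕ, F (2 * n + 1) = (I / γ₁) * (q : ℂ)^(n + 1)) :
    I * ((s : ℂ) * F 0 - 1) = (γ₀ : ℂ) * F 1 := by
  rw [hFeven 0, hFodd 0]
  have : (s : ℂ) ≠ 0 := ofReal_ne_zero.mpr hs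
  have : (γ₁ : ℂ) ≠ 0 := ofReal_ne_zero.mpr h₁
  push_cast
  field_simp
  ring

theorem laplace_recurrence_even (hs : s ≠ 0) (h₁ : γ₁ ≠ 0)
    (hFeven : ∀ n : ℕ, F (2 * n) = (((γ₁ + γ₀ * q) / (s * γ₁) : ℝ) : ℂ) * (q : ℂ)^n)
    (hFodd : ∀ n : ℕ, F (2 * n + 1) = (I / γ₁) * (q : ℂ)^(n + 1)) (n : ℕ) :
    I * (s : ℂ) * F (2 * (n + 1)) = (γ₁ : ℂ) * F (2 * n + 1) + (γ₀ : ℂ) * F (2 * (n + 1) + 1) := by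
  rw [hFeven, hFodd, hFodd]
  have : (s : ℂ) ≠ 0 := ofReal_ne_zero.mpr hs
  have : (γ₁ : ℂ) ≠ 0 := ofReal_ne_zero.mpr h₁
  push_cast
  field_simp
  ring

theorem laplace_recurrence_odd (hs : s ≠ 0) (h₁ : γ₁ ≠ 0)
    (hq : γ₀ * γ₁ * q^2 + (s^2 + γ₀^2 + γ₁^2) * q + γ₀ * γ₁ = 0)
    (hFeven : ∀ n : ℕ, F (2 * n) = (((γ₁ + γ₀ * q) / (s * γ₁) : ℝ) : ℂ) * (q : ℂ)^n)
    (hFodd : ∀ n : ℕ, F (2 * n + 1) = (I / γ₁) * (q : ℂ)^(n + 1)) (n : ℕ) :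
    I * (s : ℂ) * F (2 * n + 1) = (γ₀ : ℂ) * F (2 * n) + (γ₁ : ℂ) * F (2 * n + 2) := by
  have hqC : (γ₀ * γ₁ * q^2 + (s^2 + γ₀^2 + γ₁^2) * q + γ₀ * γ₁ : ℂ) = 0 := by
    exact_mod_cast congrArg ((↑) : ℝ → ℂ) hq
  rw [show 2 * n + 2 = 2 * (n + 1) by ring, hFodd, hFeven, hFeven]
  have : (s : ℂ) ≠ 0 := ofReal_ne_zero.mpr hs
  have : (γ₁ : ℂ) ≠ 0 := ofReal_ne_zero.mpr h₁
  push_cast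
  field_simp
  linear_combination (-(q : ℂ)^n) * hqC + ((s : ℂ)^2 * q * q^n) * I_sq

end Recurrence

theorem laplace_recurrence_general (γ₀ γ₁ s : ℝ) (h₁ : γ₁ ≠ 0) (hs : 0 < s)
    (qm : ℝ)
    (hqm : qm = -((Real.sqrt (s^2 + (γ₀ + γ₁)^2) - Real.sqrt (s^2 + (γ₀ - γ₁)^2))^2 / (4 * γ₀ * γ₁)))
    (F : ℕ → ℂ)
    (hFeven : ∀ n : ℕ, F (2 * n) = (((γ₁ + γ₀ * qm) / (s * γ₁) : ℝ) : ℂ) * (qm : ℂ)^n)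
    (hFodd : ∀ n : ℕ, F (2 * n + 1) = (Complex.I / γ₁) * (qm : ℂ)^(n + 1)) :
    Complex.I * ((s : ℂ) * F 0 - 1) = (γ₀ : ℂ) * F 1 ∧
    (∀ n : ℕ, 1 ≤ n →
      Complex.I * (s : ℂ) * F (2 * n) = (γ₁ : ℂ) * F (2 * n - 1) + (γ₀ : ℂ) * F (2 * n + 1)) ∧
    (∀ n : ℕ,
      Complex.I * (s : ℂ) * F (2 * n + 1) = (γ₀ : ℂ) * F (2 * n) + (γ₁ : ℂ) * F (2 * n + 2)) := by
  have hq : γ₀ * γ₁ * qm^2 + (s^2 + γ₀^2 + γ₁^2) * qm + γ₀ * γ₁ = 0 :=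
    hqm ▸ qMinus_quadratic γ₀ γ₁ s
  refine ⟨laplace_recurrence_origin hs.ne' h₁ hFeven hFodd, fun n hn => ?_,
    laplace_recurrence_odd hs.ne' h₁ hq hFeven hFodd⟩
  obtain ⟨m, rfl⟩ : ∃ m, n = m + 1 := ⟨n - 1, by omega⟩
  rw [show 2 * (m + 1) - 1 = 2 * m + 1 by omega]
  exact laplace_recurrence_even hs.ne' h₁ hFeven hFodd m

theorem laplace_recurrence (γ₀ γ₁ s : ℝ) (h₀ : γ₀ ≠ 0) (h₁ : γ₁ ≠ 0) (hs : 0 < s)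
    (qm : ℝ)
    (hqm : qm = -((Real.sqrt (s^2 + (γ₀ + γ₁)^2) - Real.sqrt (s^2 + (γ₀ - γ₁)^2))^2 / (4 * γ₀ * γ₁)))
    (F : ℕ → ℂ)
    (hFeven : ∀ n : ℕ, F (2 * n) = (((γ₁ + γ₀ * qm) / (s * γ₁) : ℝ) : ℂ) * (qm : ℂ)^n)
    (hFodd : ∀ n : ℕ, F (2 * n + 1) = (Complex.I / γ₁) * (qm : ℂ)^(n + 1)) :
    Complex.I * ((s : ℂ) * F 0 - 1) = (γ₀ : ℂ) * F 1 ∧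
    (∀ n : ℕ, 1 ≤ n →
      Complex.I * (s : ℂ) * F (2 * n) = (γ₁ : ℂ) * F (2 * n - 1) + (γ₀ : ℂ) * F (2 * n + 1)) ∧
    (∀ n : ℕ,
      Complex.I * (s : ℂ) * F (2 * n + 1) = (γ₀ : ℂ) * F (2 * n) + (γ₁ : ℂ) * F (2 * n + 2)) :=
  laplace_recurrence_general γ₀ γ₁ s h₁ hs qm hqm F hFeven hFodd
end
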